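/- Let G be a simple graph, let m ≥ 1, and suppose G contains a vertex v of degree 2m+1 such that the subgraph of G induced by the neighborhood N(v) contains a matching of size m. Then G does not have property E(m,1). (Indeed, if M is a matching of size m contained in G[N(v)] and v' is the unique neighbor of v not covered by M, then no perfect matching F of G satisfies M ⊆ F and vv' ∉ F.) -/

import Mathlib

/-- `M` is a matching of the simple graph `G`, given as a finite set of edges:
every edge of `M` is an edge of `G`, and distinct edges of `M` share no vertex. -/
def IsMatchingSet {V : Type*} (G : SimpleGraph V) (M : Finset (Sym2 V)) : Prop :=
  (∀ e ∈ M, e ∈ G.edgeSet) ∧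
  ∀ e ∈ M, ∀ f ∈ M, e ≠ f → ∀ v : V, v ∈ e → v ∉ f

/-- `F` is a perfect matching of `G`: a matching covering every vertex. -/
def IsPerfectMatchingSet {V : Type*} (G : SimpleGraph V) (F : Finset (Sym2 V)) : Prop :=
  IsMatchingSet G F ∧ ∀ v : V, ∃ e ∈ F, v ∈ e

/-- `G` has property `E(m,n)`: `G` is connected, has at least `2m+2n+2` vertices, and
for any two disjoint matchings `M`, `N` of sizes `m` and `n` respectively, there is a
perfect matching `F` with `M ⊆ F` and `N ∩ F = ∅`. -/
def PropE {V : Type*} [Fintype V] (G : SimpleGraph V) (m n : ℕ) : Prop :=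
  G.Connected ∧ 2 * m + 2 * n + 2 ≤ Fintype.card V ∧
  ∀ M N : Finset (Sym2 V), IsMatchingSet G M → IsMatchingSet G N →
    M.card = m → N.card = n → Disjoint M N →
    ∃ F : Finset (Sym2 V), IsPerfectMatchingSet G F ∧ M ⊆ F ∧ Disjoint N F

/-!
The `2m` vertices covered by `M` are neighbours of `v`, so exactly one neighbour `v'` of `v` is
left uncovered, and `v` itself is uncovered. A perfect matching extending `M` must match `v`
with an uncovered neighbour, i.e. with `v'`; hence the matchings `M` and `{vv'}` witness the
failure of `E(m,1)`.
-/

section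

variable {V : Type*} {G : SimpleGraph V}

def coveredVerts [DecidableEq V] (M : Finset (Sym2 V)) : Finset V :=
  M.biUnion Sym2.toFinset

@[simp]
lemma mem_coveredVerts [DecidableEq V] {M : Finset (Sym2 V)} {w : V} :
    w ∈ coveredVerts M ↔ ∃ e ∈ M, w ∈ e := by
  simp [coveredVerts, Sym2.mem_toFinset]

lemma IsMatchingSet.singleton {a b : V} (h : G.Adj a b) : IsMatchingSet G {s(a, b)} :=
  ⟨by simpa using h, by simp_all⟩

lemma IsMatchingSet.card_coveredVerts [DecidableEq V] {M : Finset (Sym2 V)}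
    (hM : IsMatchingSet G M) : (coveredVerts M).card = 2 * M.card := by
  have hdisj : (M : Set (Sym2 V)).PairwiseDisjoint Sym2.toFinset := by
    intro e he f hf hne
    rw [Function.onFun, Finset.disjoint_left]
    intro w hwe hwf
    exact hM.2 e he f hf hne w (Sym2.mem_toFinset.mp hwe) (Sym2.mem_toFinset.mp hwf)
  rw [coveredVerts, Finset.card_biUnion hdisj, mul_comm, ← smul_eq_mul, ← Finset.sum_const]
  exact Finset.sum_congr rfl fun e he =>
    Sym2.card_toFinset_of_not_isDiag e (G.not_isDiag_of_mem_edgeSet (hM.1 e he))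

/-- The edge of `F` at `v` is not in `M`, so it cannot meet the edges of `M ⊆ F`. -/
lemma IsPerfectMatchingSet.exists_partner_notMem_coveredVerts [DecidableEq V]
    {M F : Finset (Sym2 V)} (hF : IsPerfectMatchingSet G F) (hMF : M ⊆ F) {v : V}
    (hv : v ∉ coveredVerts M) :
    ∃ w, s(v, w) ∈ F ∧ G.Adj v w ∧ w ∉ coveredVerts M := by
  obtain ⟨e, heF, hve⟩ := hF.2 v
  obtain ⟨w, rfl⟩ := Sym2.mem_iff_exists.mp hve
  refine ⟨w, heF, G.mem_edgeSet.mp (hF.1.1 _ heF), ?_⟩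
  intro hw
  obtain ⟨f, hfM, hwf⟩ := mem_coveredVerts.mp hw
  have hvf : v ∉ f := fun hvf => hv (mem_coveredVerts.mpr ⟨f, hfM, hvf⟩)
  have hne : s(v, w) ≠ f := fun h => hvf (h ▸ Sym2.mem_mk_left v w)
  exact hF.1.2 _ heF f (hMF hfM) hne w (Sym2.mem_mk_right v w) hwf

lemma IsMatchingSet.exists_unique_uncovered_neighbor [DecidableEq V] [Fintype V]
    [DecidableRel G.Adj] {m : ℕ} {M : Finset (Sym2 V)} {v : V} (hM : IsMatchingSet G M)
    (hMcard : M.card = m) (hdeg : G.degree v = 2 * m + 1)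
    (hsub : coveredVerts M ⊆ G.neighborFinset v) :
    ∃ v', G.Adj v v' ∧ ∀ u, G.Adj v u → u ∉ coveredVerts M → u = v' := by
  obtain ⟨v', hv'⟩ : ∃ v', G.neighborFinset v \ coveredVerts M = {v'} := by
    rw [← Finset.card_eq_one, Finset.card_sdiff_of_subset hsub, hM.card_coveredVerts,
      G.card_neighborFinset_eq_degree, hdeg, hMcard]
    omega
  have hmem u : u ∈ G.neighborFinset v \ coveredVerts M ↔ G.Adj v u ∧ u ∉ coveredVerts M := by
    rw [Finset.mem_sdiff, G.mem_neighborFinset]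
  refine ⟨v', ((hmem v').mp (by simp [hv'])).1, fun u hvu huM => ?_⟩
  simpa [hv'] using (hmem u).mpr ⟨hvu, huM⟩

lemma IsPerfectMatchingSet.mk_mem_of_unique_uncovered_neighbor [DecidableEq V]
    {M F : Finset (Sym2 V)} {v v' : V} (hF : IsPerfectMatchingSet G F) (hMF : M ⊆ F)
    (hv : v ∉ coveredVerts M) (hv' : ∀ u, G.Adj v u → u ∉ coveredVerts M → u = v') :
    s(v, v') ∈ F := by
  obtain ⟨w, hwF, hvw, hwM⟩ := hF.exists_partner_notMem_coveredVerts hMF hv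
  rwa [← hv' w hvw hwM]

lemma not_propE_of_forced_edge [Fintype V] {m : ℕ} {M : Finset (Sym2 V)} {v v' : V}
    (hM : IsMatchingSet G M) (hMcard : M.card = m) (hvv' : G.Adj v v') (hvv'M : s(v, v') ∉ M)
    (hforced : ∀ F, IsPerfectMatchingSet G F → M ⊆ F → s(v, v') ∈ F) :
    ¬ PropE G m 1 := by
  rintro ⟨-, -, hE⟩
  obtain ⟨F, hF, hMF, hdisj⟩ := hE M {s(v, v')} hM (.singleton hvv') hMcard
    (Finset.card_singleton _) (Finset.disjoint_singleton_right.mpr hvv'M)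
  exact Finset.disjoint_singleton_left.mp hdisj (hforced F hF hMF)

end

theorem not_propE_of_matching_in_neighborhood_general
    {V : Type*} [Fintype V] (G : SimpleGraph V) [DecidableRel G.Adj]
    (m : ℕ) (v : V) (hdeg : G.degree v = 2 * m + 1)
    (M : Finset (Sym2 V)) (hM : IsMatchingSet G M) (hMcard : M.card = m)
    (hMnbr : ∀ e ∈ M, ∀ w ∈ e, G.Adj v w) :
    (∀ v' : V, G.Adj v v' → (∀ e ∈ M, v' ∉ e) →
      ¬ ∃ F : Finset (Sym2 V), IsPerfectMatchingSet G F ∧ M ⊆ F ∧ s(v, v') ∉ F) ∧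
    ¬ PropE G m 1 := by
  classical
  have hv : v ∉ coveredVerts M := by
    simpa using fun e he hve => G.irrefl (hMnbr e he v hve)
  have hsub : coveredVerts M ⊆ G.neighborFinset v := fun w hw => by
    obtain ⟨e, he, hwe⟩ := mem_coveredVerts.mp hw
    simpa using hMnbr e he w hwe
  obtain ⟨v', hvv', huniq⟩ := hM.exists_unique_uncovered_neighbor hMcard hdeg hsub
  have hforced F (hF : IsPerfectMatchingSet G F) (hMF : M ⊆ F) : s(v, v') ∈ F :=
    hF.mk_mem_of_unique_uncovered_neighbor hMF hv huniq
  refine ⟨fun u hvu huM ⟨F, hF, hMF, hvuF⟩ => ?_, ?_⟩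
  · rw [huniq u hvu (by simpa using huM)] at hvuF
    exact hvuF (hforced F hF hMF)
  · refine not_propE_of_forced_edge hM hMcard hvv' ?_ hforced
    exact fun h => hv (mem_coveredVerts.mpr ⟨_, h, Sym2.mem_mk_left v v'⟩)

/-- Let `G` contain a vertex `v` of degree `2m+1` (`m ≥ 1`) such that `G[N(v)]`
contains a matching `M` of size `m`.  Then no perfect matching `F` of `G` satisfies
`M ⊆ F` and `vv' ∉ F`, where `v'` is any neighbor of `v` not covered by `M`
(there is exactly one such neighbor); in particular `G` does not have property
`E(m,1)`. -/
theorem not_propE_of_matching_in_neighborhood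
    {V : Type*} [Fintype V] (G : SimpleGraph V) [DecidableRel G.Adj]
    (m : ℕ) (hm : 1 ≤ m) (v : V) (hdeg : G.degree v = 2 * m + 1)
    (M : Finset (Sym2 V)) (hM : IsMatchingSet G M) (hMcard : M.card = m)
    (hMnbr : ∀ e ∈ M, ∀ w ∈ e, G.Adj v w) :
    (∀ v' : V, G.Adj v v' → (∀ e ∈ M, v' ∉ e) →
      ¬ ∃ F : Finset (Sym2 V), IsPerfectMatchingSet G F ∧ M ⊆ F ∧ s(v, v') ∉ F) ∧
    ¬ PropE G m 1 :=
  not_propE_of_matching_in_neighborhood_general G m v hdeg M hM hMcard hMnbr
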